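/- There do not exist a vector φ ∈ (ℂ^2)^{⊗3} and linear maps A_i, B_i, C_i : ℂ^2 → ℂ^2 (i = 1,2) together with nonzero scalars λ_1, λ_2 such that (A_1 ⊗ B_1 ⊗ C_1)φ = λ_1 |GHZ⟩ and (A_2 ⊗ B_2 ⊗ C_2)φ = λ_2 |W⟩, where |GHZ⟩ = (1/√2)(|000⟩+|111⟩) and |W⟩ = (1/√3)(|100⟩+|010⟩+|001⟩). -/

import Mathlib

open scoped BigOperators

/-- Standard basis vector `|i⟩` of `ℂ^2`. -/
noncomputable def eVec (i : Fin 2) : Fin 2 → ℂ := fun j => if j = i then 1 else 0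

/-- Product vector `a ⊗ b ⊗ c` in `(ℂ^2)^{⊗3}`. -/
noncomputable def tens2 (a b c : Fin 2 → ℂ) : Fin 2 × Fin 2 × Fin 2 → ℂ :=
  fun p => a p.1 * b p.2.1 * c p.2.2

/-- `|GHZ⟩ = (1/√2)(|000⟩ + |111⟩)`. -/
noncomputable def GHZVec : Fin 2 × Fin 2 × Fin 2 → ℂ :=
  ((Real.sqrt 2 : ℂ))⁻¹ •
    (tens2 (eVec 0) (eVec 0) (eVec 0) + tens2 (eVec 1) (eVec 1) (eVec 1))

/-- `|W⟩ = (1/√3)(|100⟩ + |010⟩ + |001⟩)`. -/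
noncomputable def WVec : Fin 2 × Fin 2 × Fin 2 → ℂ :=
  ((Real.sqrt 3 : ℂ))⁻¹ •
    (tens2 (eVec 1) (eVec 0) (eVec 0) + tens2 (eVec 0) (eVec 1) (eVec 0) +
      tens2 (eVec 0) (eVec 0) (eVec 1))

/-- The action of `A ⊗ B ⊗ C` on `(ℂ^2)^{⊗3}`. -/
noncomputable def applyLoc (A B C : Matrix (Fin 2) (Fin 2) ℂ)
    (v : Fin 2 × Fin 2 × Fin 2 → ℂ) : Fin 2 × Fin 2 × Fin 2 → ℂ :=
  fun p => ∑ q : Fin 2 × Fin 2 × Fin 2,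
    A p.1 q.1 * B p.2.1 q.2.1 * C p.2.2 q.2.2 * v q

/-!
The Cayley hyperdeterminant `Det`, the discriminant of the binary quadratic form
`(x, y) ↦ det (x • t(0,·,·) + y • t(1,·,·))`, satisfies
`Det ((A ⊗ B ⊗ C) φ) = (det A · det B · det C)² · Det φ`.
Since `Det GHZ ≠ 0`, a preimage `φ` of GHZ has `Det φ ≠ 0`, while `Det W = 0`; so one of the
maps sending `φ` to W is singular. A singular factor makes the corresponding flattening of the
image have rank `≤ 1`, but every flattening of W has rank 2.
-/

open Matrix

lemma Matrix.mulVec_mul_mulVec_comm_of_det_eq_zero {R : Type*} [CommRing R]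
    {M : Matrix (Fin 2) (Fin 2) R} (hM : M.det = 0) (u v : Fin 2 → R) :
    (M *ᵥ u) 0 * (M *ᵥ v) 1 = (M *ᵥ v) 0 * (M *ᵥ u) 1 := by
  rw [det_fin_two] at hM
  simp only [mulVec, dotProduct, Fin.sum_univ_two]
  linear_combination (u 0 * v 1 - v 0 * u 1) * hM

section ThreeQubits

variable (A B C : Matrix (Fin 2) (Fin 2) ℂ) (φ : Fin 2 × Fin 2 × Fin 2 → ℂ)

noncomputable def sliceDet (t : Fin 2 × Fin 2 × Fin 2 → ℂ) (i : Fin 2) : ℂ :=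
  t (i, 0, 0) * t (i, 1, 1) - t (i, 0, 1) * t (i, 1, 0)

/-- The mixed coefficient of `(x, y) ↦ det (x • t(0,·,·) + y • t(1,·,·))`. -/
noncomputable def sliceDetMixed (t : Fin 2 × Fin 2 × Fin 2 → ℂ) : ℂ :=
  t (0, 0, 0) * t (1, 1, 1) + t (1, 0, 0) * t (0, 1, 1) - t (0, 0, 1) * t (1, 1, 0)
    - t (1, 0, 1) * t (0, 1, 0)

noncomputable def hyperdet (t : Fin 2 × Fin 2 × Fin 2 → ℂ) : ℂ :=
  sliceDetMixed t ^ 2 - 4 * sliceDet t 0 * sliceDet t 1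

lemma sliceDet_applyLoc (i : Fin 2) :
    sliceDet (applyLoc A B C φ) i = B.det * C.det *
      (sliceDet φ 0 * A i 0 ^ 2 + sliceDetMixed φ * (A i 0 * A i 1) +
        sliceDet φ 1 * A i 1 ^ 2) := by
  simp only [sliceDet, sliceDetMixed, applyLoc, Fintype.sum_prod_type, Fin.sum_univ_two,
    det_fin_two]
  ring

lemma sliceDetMixed_applyLoc :
    sliceDetMixed (applyLoc A B C φ) = B.det * C.det *
      (2 * sliceDet φ 0 * (A 0 0 * A 1 0) + sliceDetMixed φ * (A 0 0 * A 1 1 + A 0 1 * A 1 0) +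
        2 * sliceDet φ 1 * (A 0 1 * A 1 1)) := by
  simp only [sliceDet, sliceDetMixed, applyLoc, Fintype.sum_prod_type, Fin.sum_univ_two,
    det_fin_two]
  ring

lemma hyperdet_applyLoc :
    hyperdet (applyLoc A B C φ) = (A.det * B.det * C.det) ^ 2 * hyperdet φ := by
  simp only [hyperdet, sliceDet_applyLoc, sliceDetMixed_applyLoc, det_fin_two]
  ring

lemma hyperdet_smul (l : ℂ) (t : Fin 2 × Fin 2 × Fin 2 → ℂ) :
    hyperdet (l • t) = l ^ 4 * hyperdet t := by
  simp only [hyperdet, sliceDet, sliceDetMixed, Pi.smul_apply, smul_eq_mul]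
  ring

lemma hyperdet_GHZVec : hyperdet GHZVec = 1 / 4 := by
  have hGHZ :
      hyperdet (tens2 (eVec 0) (eVec 0) (eVec 0) + tens2 (eVec 1) (eVec 1) (eVec 1)) = 1 := by
    simp [hyperdet, sliceDet, sliceDetMixed, tens2, eVec]
  have h4 : (Real.sqrt 2 : ℂ) ^ 4 = 4 := by
    rw [← Complex.ofReal_pow, show (4 : ℕ) = 2 * 2 from rfl, pow_mul, Real.sq_sqrt zero_le_two]
    norm_num
  rw [GHZVec, hyperdet_smul, hGHZ, inv_pow, h4]
  norm_num

lemma hyperdet_WVec : hyperdet WVec = 0 := by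
  simp [hyperdet, sliceDet, sliceDetMixed, WVec, tens2, eVec]

lemma applyLoc_apply_eq_mulVec (i j k : Fin 2) :
    applyLoc A B C φ (i, j, k) = (A *ᵥ fun i' => applyLoc 1 B C φ (i', j, k)) i := by
  simp only [applyLoc, mulVec, dotProduct, Fintype.sum_prod_type, Fin.sum_univ_two, one_apply_eq,
    one_apply_ne Fin.zero_ne_one, one_apply_ne Fin.zero_ne_one.symm]
  ring

lemma applyLoc_minor_eq_of_det_eq_zero (hA : A.det = 0) (j k j' k' : Fin 2) :
    applyLoc A B C φ (0, j, k) * applyLoc A B C φ (1, j', k') =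
      applyLoc A B C φ (0, j', k') * applyLoc A B C φ (1, j, k) := by
  rw [applyLoc_apply_eq_mulVec A B C φ 0 j k, applyLoc_apply_eq_mulVec A B C φ 1 j' k',
    applyLoc_apply_eq_mulVec A B C φ 0 j' k', applyLoc_apply_eq_mulVec A B C φ 1 j k]
  exact mulVec_mul_mulVec_comm_of_det_eq_zero hA _ _

def cycleFactors (t : Fin 2 × Fin 2 × Fin 2 → ℂ) : Fin 2 × Fin 2 × Fin 2 → ℂ :=
  fun p => t (p.2.1, p.2.2, p.1)

lemma applyLoc_cycleFactors :
    applyLoc A B C (cycleFactors φ) = cycleFactors (applyLoc B C A φ) := by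
  funext p
  simp only [cycleFactors, applyLoc, Fintype.sum_prod_type, Fin.sum_univ_two]
  ring

lemma cycleFactors_smul_WVec (l : ℂ) : cycleFactors (l • WVec) = l • WVec := by
  funext ⟨i, j, k⟩
  fin_cases i <;> fin_cases j <;> fin_cases k <;> simp [cycleFactors, WVec, tens2, eVec]

lemma det_fst_ne_zero_of_applyLoc_eq_smul_WVec {l : ℂ} (hl : l ≠ 0)
    (h : applyLoc A B C φ = l • WVec) : A.det ≠ 0 := by
  intro hA
  -- `W(0,0,1) W(1,0,0) ≠ 0` while `W(0,0,0) W(1,0,1) = 0`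
  have hminor := applyLoc_minor_eq_of_det_eq_zero A B C φ hA 0 1 0 0
  simp [h, WVec, tens2, eVec, hl] at hminor

lemma dets_ne_zero_of_applyLoc_eq_smul_WVec {l : ℂ} (hl : l ≠ 0)
    (h : applyLoc A B C φ = l • WVec) : A.det ≠ 0 ∧ B.det ≠ 0 ∧ C.det ≠ 0 := by
  have hC : applyLoc C A B (cycleFactors φ) = l • WVec := by
    rw [applyLoc_cycleFactors, h, cycleFactors_smul_WVec]
  have hB : applyLoc B C A (cycleFactors (cycleFactors φ)) = l • WVec := by
    rw [applyLoc_cycleFactors, hC, cycleFactors_smul_WVec]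
  exact ⟨det_fst_ne_zero_of_applyLoc_eq_smul_WVec A B C φ hl h,
    det_fst_ne_zero_of_applyLoc_eq_smul_WVec B C A _ hl hB,
    det_fst_ne_zero_of_applyLoc_eq_smul_WVec C A B _ hl hC⟩

end ThreeQubits

/-- No single three-qubit vector can be mapped by local linear maps onto a
nonzero multiple of `|GHZ⟩` and also onto a nonzero multiple of `|W⟩`. -/
theorem stmt9 :
    ¬ ∃ (φ : Fin 2 × Fin 2 × Fin 2 → ℂ)
        (A₁ B₁ C₁ A₂ B₂ C₂ : Matrix (Fin 2) (Fin 2) ℂ) (l₁ l₂ : ℂ),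
      l₁ ≠ 0 ∧ l₂ ≠ 0 ∧
        applyLoc A₁ B₁ C₁ φ = l₁ • GHZVec ∧ applyLoc A₂ B₂ C₂ φ = l₂ • WVec := by
  rintro ⟨φ, A₁, B₁, C₁, A₂, B₂, C₂, l₁, l₂, hl₁, hl₂, hGHZ, hW⟩
  have hφ : hyperdet φ ≠ 0 := by
    intro hφ
    have hGHZdet := hyperdet_applyLoc A₁ B₁ C₁ φ
    rw [hGHZ, hyperdet_smul, hyperdet_GHZVec, hφ, mul_zero] at hGHZdet
    simp [hl₁] at hGHZdet
  obtain ⟨hA, hB, hC⟩ := dets_ne_zero_of_applyLoc_eq_smul_WVec A₂ B₂ C₂ φ hl₂ hW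
  have hWdet := hyperdet_applyLoc A₂ B₂ C₂ φ
  rw [hW, hyperdet_smul, hyperdet_WVec, mul_zero, eq_comm] at hWdet
  exact mul_ne_zero (pow_ne_zero 2 (mul_ne_zero (mul_ne_zero hA hB) hC)) hφ hWdet
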